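/- Let X := {2^{2^k} : k ∈ ℕ, k ≥ 1} ⊆ ℝ, let ρ(x,y) := |x−y|, let μ := Σ_{k=1}^∞ 2^k·δ_{2^{2^k}}, and let f := 𝟏_{{4}} be the indicator function of the point 4 = 2^{2^1}. Then: (a) ∫_X |f|² dμ = 2, so ‖f‖_{L²(X,μ)} = √2 ∈ (0,∞); (b) for every s ∈ (0,1), I(s) := ∫_X (∫_X |f(x)−f(y)|/(U(x,y)·ρ(x,y)^s) dμ(y))² dμ(x) < ∞; and (c) lim_{s→0⁺} s²·I(s) = 0. -/

import Mathlib

/-!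
Only pairs of atoms one of which is `4` contribute to `I(s)`. For the atom `x = 2^{2^{k+1}}`
the ball `B(4, x - 4)` contains the previous atom, so `U(x, 4) ≥ 2^k`, while `x - 4 ≥ 2^{2^k}`.
Hence the inner integral at `4` is at most `2 L(s)` with the lacunary series
`L(s) = Σ_k 2^{-s 2^{k+1}}`, the inner integral at the other atoms decays geometrically, and
`I(s) ≤ 8 L(s)² + 8`. Since `s 2^{-s 2^m} ≤ 2^{1-m}`, the series `s L(s)` is dominated by a
convergent one, so `s L(s) ≤ 2` and, by dominated convergence, `s L(s) → 0` as `s → 0⁺`.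
-/

noncomputable section

open MeasureTheory Filter Set
open scoped ENNReal NNReal Topology

namespace Paper

/-- The measure `μ = Σ_{k ≥ 1} 2^k δ_{2^{2^k}}` on `ℝ` (indexed below by `k+1`, `k : ℕ`). -/
def μX : Measure ℝ :=
  Measure.sum fun k : ℕ => ((2 : ℝ≥0∞) ^ (k + 1)) • Measure.dirac ((2 : ℝ) ^ 2 ^ (k + 1))

/-- `U(x,y) := min{μ(B(x,|x-y|)), μ(B(y,|x-y|))}`. -/
def UX (x y : ℝ) : ℝ≥0∞ :=
  min (μX (Metric.ball x |x - y|)) (μX (Metric.ball y |x - y|))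

/-- `f = 𝟏_{{4}}`, the indicator of the point `4 = 2^{2^1}`. -/
def fX : ℝ → ℝ := ({(4 : ℝ)} : Set ℝ).indicator fun _ => 1

/-- `I(s) = ∫_X (∫_X |f(x)-f(y)| / (U(x,y) |x-y|^s) dμ(y))² dμ(x)`. -/
def IX (s : ℝ) : ℝ≥0∞ :=
  ∫⁻ x, (∫⁻ y, ENNReal.ofReal |fX x - fX y| /
      (UX x y * ENNReal.ofReal |x - y| ^ s) ∂μX) ^ 2 ∂μX

end Paper

theorem lintegral_sum_smul_dirac {ι α : Type*} [MeasurableSpace α]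
    [MeasurableSingletonClass α] (w : ι → ℝ≥0∞) (p : ι → α) (g : α → ℝ≥0∞) :
    ∫⁻ x, g x ∂(Measure.sum fun k => w k • Measure.dirac (p k)) = ∑' k, w k * g (p k) := by
  simp only [lintegral_sum_measure, lintegral_smul_measure, lintegral_dirac, smul_eq_mul]

theorem le_sum_smul_dirac_apply {ι α : Type*} [MeasurableSpace α]
    (w : ι → ℝ≥0∞) (p : ι → α) {S : Set α} {j : ι} (h : p j ∈ S) :
    w j ≤ (Measure.sum fun k => w k • Measure.dirac (p k)) S := by
  calc w j = (w j • Measure.dirac (p j)) S := by simp [Measure.dirac_apply_of_mem h]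
    _ ≤ _ := Measure.le_sum (fun k => w k • Measure.dirac (p k)) j S

theorem le_two_mul_two_rpow (x : ℝ) : x ≤ 2 * 2 ^ x := by
  have h2x : 1 + x * Real.log 2 ≤ 2 ^ x := by
    rw [Real.rpow_def_of_pos two_pos, mul_comm]
    exact (add_comm _ _).le.trans (Real.add_one_le_exp _)
  have hlog := Real.log_two_gt_d9
  have h2x_pos : (0 : ℝ) < 2 ^ x := by positivity
  rcases le_or_gt x 0 with hx | hx
  · linarith
  · nlinarith

theorem ofReal_mul_inv_two_rpow_le (s : ℝ) (m : ℕ) :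
    ENNReal.ofReal s * ((2 : ℝ≥0∞) ^ (s * 2 ^ m))⁻¹ ≤ 2 * 2⁻¹ ^ m := by
  have h2x : (0 : ℝ) < 2 ^ (s * 2 ^ m) := by positivity
  have hreal : s * (2 ^ (s * 2 ^ m))⁻¹ ≤ 2 * 2⁻¹ ^ m := by
    rw [← div_eq_mul_inv, div_le_iff₀ h2x, inv_pow, mul_assoc, ← div_eq_inv_mul,
      mul_div_assoc', le_div_iff₀ (by positivity), mul_comm]
    exact le_two_mul_two_rpow _
  calc ENNReal.ofReal s * ((2 : ℝ≥0∞) ^ (s * 2 ^ m))⁻¹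
      = ENNReal.ofReal (s * (2 ^ (s * 2 ^ m))⁻¹) := by
        rw [ENNReal.ofReal_mul' (by positivity), ENNReal.ofReal_inv_of_pos h2x,
          ← ENNReal.ofReal_rpow_of_pos two_pos, ENNReal.ofReal_ofNat]
    _ ≤ ENNReal.ofReal (2 * 2⁻¹ ^ m) := ENNReal.ofReal_le_ofReal hreal
    _ = 2 * 2⁻¹ ^ m := by
        rw [ENNReal.ofReal_mul zero_le_two, ENNReal.ofReal_pow (by norm_num),
          ENNReal.ofReal_inv_of_pos two_pos, ENNReal.ofReal_ofNat]

theorem inv_two_rpow_le_one {x : ℝ} (hx : 0 ≤ x) : ((2 : ℝ≥0∞) ^ x)⁻¹ ≤ 1 := by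
  simpa using ENNReal.rpow_le_rpow_of_exponent_le one_le_two hx

theorem two_pow_mul_inv_two_pow (n : ℕ) : (2 : ℝ≥0∞) ^ n * 2⁻¹ ^ n = 1 := by
  rw [← mul_pow, ENNReal.mul_inv_cancel two_ne_zero ENNReal.ofNat_ne_top, one_pow]

theorem two_mul_inv_two_pow_succ (k : ℕ) : (2 : ℝ≥0∞) * 2⁻¹ ^ (k + 1) = 2⁻¹ ^ k := by
  rw [pow_succ', ← mul_assoc, ENNReal.mul_inv_cancel two_ne_zero ENNReal.ofNat_ne_top,
    one_mul]

theorem tendsto_ennrealOfReal_nhdsGT_zero : Tendsto ENNReal.ofReal (𝓝[>] 0) (𝓝 0) := by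
  simpa using (ENNReal.continuous_ofReal.tendsto 0).mono_left nhdsWithin_le_nhds

namespace Paper

def pX (k : ℕ) : ℝ := 2 ^ 2 ^ (k + 1)

theorem lintegral_μX (g : ℝ → ℝ≥0∞) :
    ∫⁻ x, g x ∂μX = ∑' k, (2 : ℝ≥0∞) ^ (k + 1) * g (pX k) :=
  lintegral_sum_smul_dirac _ pX g

theorem pow_succ_le_μX {S : Set ℝ} {j : ℕ} (h : pX j ∈ S) : (2 : ℝ≥0∞) ^ (j + 1) ≤ μX S :=
  le_sum_smul_dirac_apply (fun k => (2 : ℝ≥0∞) ^ (k + 1)) pX h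

theorem pX_zero : pX 0 = 4 := by norm_num [pX]

theorem pX_strictMono : StrictMono pX := fun _ _ h =>
  pow_lt_pow_right₀ one_lt_two (Nat.pow_lt_pow_right one_lt_two (Nat.succ_lt_succ h))

theorem four_lt_pX_succ (k : ℕ) : 4 < pX (k + 1) := pX_zero ▸ pX_strictMono k.succ_pos

theorem two_pow_two_pow_le_pX_succ_sub_four (k : ℕ) :
    (2 : ℝ) ^ 2 ^ (k + 1) ≤ pX (k + 1) - 4 := by
  have hsq : pX (k + 1) = (2 ^ 2 ^ (k + 1)) ^ 2 := by rw [pX, ← pow_mul, ← pow_succ]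
  have h4 : (4 : ℝ) ≤ 2 ^ 2 ^ (k + 1) := by
    calc (4 : ℝ) = 2 ^ 2 ^ 1 := by norm_num
      _ ≤ 2 ^ 2 ^ (k + 1) :=
        pow_le_pow_right₀ one_le_two (Nat.pow_le_pow_right two_pos (Nat.succ_pos k))
  rw [hsq]
  nlinarith

theorem abs_pX_succ_sub_pX_zero (k : ℕ) : |pX (k + 1) - pX 0| = pX (k + 1) - 4 := by
  rw [pX_zero, abs_of_pos (sub_pos.2 (four_lt_pX_succ k))]

theorem pow_succ_le_UX (k : ℕ) : (2 : ℝ≥0∞) ^ (k + 1) ≤ UX (pX (k + 1)) (pX 0) := by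
  rw [UX, abs_pX_succ_sub_pX_zero]
  refine le_min ?_ (pow_succ_le_μX ?_)
  · exact (pow_le_pow_right₀ one_le_two (k + 1).le_succ).trans
      (pow_succ_le_μX (Metric.mem_ball_self (sub_pos.2 (four_lt_pX_succ k))))
  · have h4 : 4 ≤ pX k := pX_zero ▸ pX_strictMono.monotone k.zero_le
    have hlt := pX_strictMono k.lt_succ_self
    rw [Metric.mem_ball, Real.dist_eq, pX_zero, abs_of_nonneg (by linarith)]
    linarith

theorem fX_pX_zero : fX (pX 0) = 1 := by simp [fX, pX_zero]

theorem fX_pX_succ (k : ℕ) : fX (pX (k + 1)) = 0 :=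
  indicator_of_notMem (mem_singleton_iff.not.2 (four_lt_pX_succ k).ne') _

theorem UX_comm (x y : ℝ) : UX x y = UX y x := by
  rw [UX, UX, abs_sub_comm, min_comm]

def kX (s x y : ℝ) : ℝ≥0∞ :=
  ENNReal.ofReal |fX x - fX y| / (UX x y * ENNReal.ofReal |x - y| ^ s)

theorem kX_comm (s x y : ℝ) : kX s x y = kX s y x := by
  rw [kX, kX, UX_comm, abs_sub_comm x, abs_sub_comm (fX x)]

theorem kX_eq_zero_of_fX_eq {s x y : ℝ} (h : fX x = fX y) : kX s x y = 0 := by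
  simp [kX, h]

theorem two_rpow_le_ofReal_abs_pX_succ_sub_pX_zero_rpow {s : ℝ} (hs : 0 ≤ s) (k : ℕ) :
    (2 : ℝ≥0∞) ^ (s * 2 ^ (k + 1)) ≤ ENNReal.ofReal |pX (k + 1) - pX 0| ^ s := by
  have h := ENNReal.ofReal_le_ofReal (two_pow_two_pow_le_pX_succ_sub_four k)
  rw [ENNReal.ofReal_pow zero_le_two, ENNReal.ofReal_ofNat, ← ENNReal.rpow_natCast] at h
  rw [abs_pX_succ_sub_pX_zero, mul_comm, ENNReal.rpow_mul]
  exact_mod_cast ENNReal.rpow_le_rpow h hs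

theorem kX_pX_succ_pX_zero_le {s : ℝ} (hs : 0 ≤ s) (k : ℕ) :
    kX s (pX (k + 1)) (pX 0) ≤ 2⁻¹ ^ (k + 1) * ((2 : ℝ≥0∞) ^ (s * 2 ^ (k + 1)))⁻¹ := by
  rw [kX, fX_pX_succ, fX_pX_zero, ← ENNReal.inv_pow, ← ENNReal.mul_inv (by simp) (by simp)]
  simpa using ENNReal.inv_le_inv.2
    (mul_le_mul' (pow_succ_le_UX k) (two_rpow_le_ofReal_abs_pX_succ_sub_pX_zero_rpow hs k))

def lacunarySum (s : ℝ) : ℝ≥0∞ := ∑' k : ℕ, ((2 : ℝ≥0∞) ^ (s * 2 ^ (k + 1)))⁻¹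

theorem lintegral_kX_pX_zero_le {s : ℝ} (hs : 0 ≤ s) :
    ∫⁻ y, kX s (pX 0) y ∂μX ≤ 2 * lacunarySum s := by
  rw [lintegral_μX, tsum_eq_zero_add' ENNReal.summable, kX_eq_zero_of_fX_eq rfl, mul_zero,
    zero_add, lacunarySum, ← ENNReal.tsum_mul_left]
  refine ENNReal.tsum_le_tsum fun k => ?_
  calc (2 : ℝ≥0∞) ^ (k + 1 + 1) * kX s (pX 0) (pX (k + 1))
      ≤ 2 * 2 ^ (k + 1) * (2⁻¹ ^ (k + 1) * ((2 : ℝ≥0∞) ^ (s * 2 ^ (k + 1)))⁻¹) := by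
        rw [pow_succ' _ (k + 1), kX_comm]
        gcongr
        exact kX_pX_succ_pX_zero_le hs k
    _ = 2 * ((2 : ℝ≥0∞) ^ (s * 2 ^ (k + 1)))⁻¹ := by
        rw [mul_assoc, ← mul_assoc (2 ^ (k + 1)), two_pow_mul_inv_two_pow, one_mul]

theorem lintegral_kX_pX_succ_le {s : ℝ} (hs : 0 ≤ s) (k : ℕ) :
    ∫⁻ y, kX s (pX (k + 1)) y ∂μX ≤ 2⁻¹ ^ k := by
  rw [lintegral_μX, tsum_eq_single 0 fun j hj => ?_]
  · calc (2 : ℝ≥0∞) ^ (0 + 1) * kX s (pX (k + 1)) (pX 0)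
        ≤ 2 * (2⁻¹ ^ (k + 1) * 1) := by
          rw [zero_add, pow_one]
          gcongr
          refine (kX_pX_succ_pX_zero_le hs k).trans ?_
          gcongr
          exact inv_two_rpow_le_one (by positivity)
      _ = 2⁻¹ ^ k := by rw [mul_one, two_mul_inv_two_pow_succ]
  · obtain ⟨j, rfl⟩ := Nat.exists_eq_succ_of_ne_zero hj
    rw [kX_eq_zero_of_fX_eq (by rw [fX_pX_succ, fX_pX_succ]), mul_zero]

theorem IX_le {s : ℝ} (hs : 0 ≤ s) : IX s ≤ 8 * lacunarySum s ^ 2 + 8 := by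
  change ∫⁻ x, (∫⁻ y, kX s x y ∂μX) ^ 2 ∂μX ≤ _
  rw [lintegral_μX, tsum_eq_zero_add' ENNReal.summable]
  refine add_le_add ?_ ?_
  · calc (2 : ℝ≥0∞) ^ (0 + 1) * (∫⁻ y, kX s (pX 0) y ∂μX) ^ 2
        ≤ 2 * (2 * lacunarySum s) ^ 2 := by
          rw [zero_add, pow_one]
          gcongr
          exact lintegral_kX_pX_zero_le hs
      _ = 8 * lacunarySum s ^ 2 := by ring
  · calc ∑' k, (2 : ℝ≥0∞) ^ (k + 1 + 1) * (∫⁻ y, kX s (pX (k + 1)) y ∂μX) ^ 2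
        ≤ ∑' k, 4 * 2 ^ k * (2⁻¹ ^ k) ^ 2 := by
          refine ENNReal.tsum_le_tsum fun k => ?_
          rw [show (2 : ℝ≥0∞) ^ (k + 1 + 1) = 4 * 2 ^ k by ring]
          gcongr
          exact lintegral_kX_pX_succ_le hs k
      _ = ∑' k : ℕ, 4 * 2⁻¹ ^ k := by
          congr 1 with k
          rw [sq, ← mul_assoc, mul_assoc 4, two_pow_mul_inv_two_pow, mul_one]
      _ = 8 := by
          rw [ENNReal.tsum_mul_left, ENNReal.tsum_geometric_two]
          norm_num

theorem ofReal_mul_lacunarySum_le (s : ℝ) : ENNReal.ofReal s * lacunarySum s ≤ 2 := by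
  calc ENNReal.ofReal s * lacunarySum s
      ≤ ∑' k : ℕ, 2 * 2⁻¹ ^ (k + 1) := by
        rw [lacunarySum, ← ENNReal.tsum_mul_left]
        exact ENNReal.tsum_le_tsum fun k => ofReal_mul_inv_two_rpow_le s (k + 1)
    _ = 2 := by simp_rw [two_mul_inv_two_pow_succ, ENNReal.tsum_geometric_two]

theorem lacunarySum_lt_top {s : ℝ} (hs : 0 < s) : lacunarySum s < ∞ :=
  ENNReal.lt_top_of_mul_ne_top_right
    (ne_top_of_le_ne_top ENNReal.ofNat_ne_top (ofReal_mul_lacunarySum_le s))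
    (ENNReal.ofReal_pos.2 hs).ne'

theorem tendsto_ofReal_mul_lacunarySum :
    Tendsto (fun s => ENNReal.ofReal s * lacunarySum s) (𝓝[>] 0) (𝓝 0) := by
  simp_rw [lacunarySum, ← ENNReal.tsum_mul_left, ← lintegral_count]
  have hlim (k : ℕ) :
      Tendsto (fun s => ENNReal.ofReal s * ((2 : ℝ≥0∞) ^ (s * 2 ^ (k + 1)))⁻¹) (𝓝[>] 0) (𝓝 0) := by
    refine tendsto_nhds_bot_mono tendsto_ennrealOfReal_nhdsGT_zero ?_
    filter_upwards [self_mem_nhdsWithin] with s hs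
    exact mul_le_of_le_one_right' (inv_two_rpow_le_one (by positivity [hs.out]))
  simpa using tendsto_lintegral_filter_of_dominated_convergence (μ := Measure.count)
    (fun k : ℕ => 2 * 2⁻¹ ^ (k + 1)) (Eventually.of_forall fun _ => measurable_of_countable _)
    (Eventually.of_forall fun s => ae_of_all _ fun k => ofReal_mul_inv_two_rpow_le s (k + 1))
    (by simp_rw [lintegral_count, two_mul_inv_two_pow_succ, ENNReal.tsum_geometric_two]; simp)
    (ae_of_all _ hlim)

theorem lintegral_ofReal_abs_fX_sq : ∫⁻ x, ENNReal.ofReal |fX x| ^ 2 ∂μX = 2 := by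
  rw [lintegral_μX, tsum_eq_single 0 fun k hk => ?_]
  · simp [fX_pX_zero]
  · obtain ⟨k, rfl⟩ := Nat.exists_eq_succ_of_ne_zero hk
    simp [fX_pX_succ]

theorem IX_lt_top {s : ℝ} (hs : 0 < s) : IX s < ∞ := by
  have := lacunarySum_lt_top hs
  exact (IX_le hs.le).trans_lt (by finiteness)

theorem ofReal_sq_mul_IX_le {s : ℝ} (hs : 0 ≤ s) :
    ENNReal.ofReal s ^ 2 * IX s ≤
      8 * (ENNReal.ofReal s * lacunarySum s) ^ 2 + 8 * ENNReal.ofReal s ^ 2 :=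
  calc ENNReal.ofReal s ^ 2 * IX s ≤ ENNReal.ofReal s ^ 2 * (8 * lacunarySum s ^ 2 + 8) := by
        gcongr
        exact IX_le hs
    _ = 8 * (ENNReal.ofReal s * lacunarySum s) ^ 2 + 8 * ENNReal.ofReal s ^ 2 := by ring

theorem statement10 :
    (∫⁻ x, ENNReal.ofReal |fX x| ^ 2 ∂μX) = 2 ∧
    (∀ s ∈ Set.Ioo (0:ℝ) 1, IX s < ∞) ∧
    Tendsto (fun s : ℝ => ENNReal.ofReal s ^ 2 * IX s) (𝓝[>] (0:ℝ)) (𝓝 0) := by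
  refine ⟨lintegral_ofReal_abs_fX_sq, fun s hs => IX_lt_top hs.1, ?_⟩
  have hbound : Tendsto (fun s => 8 * (ENNReal.ofReal s * lacunarySum s) ^ 2 +
      8 * ENNReal.ofReal s ^ 2) (𝓝[>] 0) (𝓝 0) := by
    have h8 : (8 : ℝ≥0∞) ≠ ∞ := ENNReal.ofNat_ne_top
    have h₁ := ENNReal.Tendsto.pow (n := 2) tendsto_ofReal_mul_lacunarySum
    have h₂ := ENNReal.Tendsto.pow (n := 2) tendsto_ennrealOfReal_nhdsGT_zero
    simpa using (ENNReal.Tendsto.const_mul h₁ (Or.inr h8)).add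
      (ENNReal.Tendsto.const_mul h₂ (Or.inr h8))
  refine tendsto_nhds_bot_mono hbound ?_
  filter_upwards [self_mem_nhdsWithin] with s hs
  exact ofReal_sq_mul_IX_le (le_of_lt hs)

end Paper
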